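/- arXiv:2210.11053 — 2 statements merged into one kernel-verified Lean document; each statement's English description precedes it below -/
import Mathlib

section
/- Under the fitted mixed-propensity model, for every group r ∈ G, the expected number of sampled within-group directed paths of length 2 that do not traverse the same edge twice satisfies E[ Σ_{j∈N} Σ_{i,k : g i = g k = r, ¬(i = j ∧ j = k)} Â i j · Â j k + Σ_{j : g j = r} Â j j (Â j j − 1) ] = Σ_{j∈N} d_{j,r}^i · d_{j,r}^o. In particular, if A has no self-loops (A i i = 0 for all i), the right-hand side equals the observed number of within-group-r directed paths of length 2. -/
open MeasureTheory ProbabilityTheory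
open scoped ProbabilityTheory NNReal

/-- Out-degree of node `i` to group `s`: `d_{i,s}^o = ∑_{j : g j = s} A i j`. -/
def dOut {N G : Type*} [Fintype N] [DecidableEq G] (g : N → G) (a : N → N → ℕ)
    (i : N) (s : G) : ℕ := ∑ j ∈ Finset.univ.filter (fun j => g j = s), a i j

/-- In-degree of node `i` from group `s`: `d_{i,s}^i = ∑_{j : g j = s} A j i`. -/
def dIn {N G : Type*} [Fintype N] [DecidableEq G] (g : N → G) (a : N → N → ℕ)
    (i : N) (s : G) : ℕ := ∑ j ∈ Finset.univ.filter (fun j => g j = s), a j i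

/-- Number of edges from group `r` to group `s`. -/
def mEdges {N G : Type*} [Fintype N] [DecidableEq G] (g : N → G) (a : N → N → ℕ)
    (r s : G) : ℕ :=
  ∑ i ∈ Finset.univ.filter (fun i => g i = r),
    ∑ j ∈ Finset.univ.filter (fun j => g j = s), a i j

/-- The number of within-group-`r` directed paths of length 2 of a matrix `b` (with real
entries) that do not traverse the same edge twice: pairs `(i, k)` in group `r` with middle
node `j`, excluding the double use `i = j = k` of a self-loop, plus the paths
`A j j (A j j − 1)` using two distinct self-loops at `j`. -/
def pathsTwoWithin {N G : Type*} [Fintype N] [DecidableEq N] [DecidableEq G]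
    (g : N → G) (b : N → N → ℝ) (r : G) : ℝ :=
  (∑ j : N, ∑ p ∈ Finset.univ.filter
      (fun p : N × N => g p.1 = r ∧ g p.2 = r ∧ ¬(p.1 = j ∧ j = p.2)),
      b p.1 j * b j p.2)
    + ∑ j ∈ Finset.univ.filter (fun j => g j = r), b j j * (b j j - 1)

open Finset Real
open scoped Nat

/-!
Each `Âᵢⱼ` is Poisson with mean `λᵢⱼ = d^o_{i,g j} d^i_{j,g i} / m_{g i,g j}`. For `(i, j) ≠ (j, k)`
independence gives `E[Âᵢⱼ Âⱼₖ] = λᵢⱼ λⱼₖ`, and the second factorial moment of a Poisson variable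
gives `E[Âⱼⱼ (Âⱼⱼ - 1)] = λⱼⱼ²`, which is exactly the term `i = j = k` missing from the first sum.
So the expectation is `∑ⱼ (∑_{i ∈ r} λᵢⱼ) (∑_{k ∈ r} λⱼₖ)`, and summing `λ` over a group recovers
the degrees because `∑_{i ∈ r} d^o_{i,s} = m_{rs}`. Applied to `A` itself, the same counting
identity `paths + ∑_{j ∈ r} Aⱼⱼ = ∑ⱼ d^i_{j,r} d^o_{j,r}` gives the second claim.
-/

section PathCount

variable {N G : Type*} [Fintype N] [DecidableEq N] [DecidableEq G]

lemma sum_pairs_within_erase_diag_mul (g : N → G) (r : G) (j : N) (u v : N → ℝ) :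
    ∑ p ∈ univ.filter (fun p : N × N => g p.1 = r ∧ g p.2 = r ∧ ¬(p.1 = j ∧ j = p.2)),
        u p.1 * v p.2
      = (∑ i ∈ univ.filter (fun i => g i = r), u i) * (∑ k ∈ univ.filter (fun k => g k = r), v k)
        - if g j = r then u j * v j else 0 := by
  set S := univ.filter (fun i => g i = r)
  have hpairs : univ.filter (fun p : N × N => g p.1 = r ∧ g p.2 = r ∧ ¬(p.1 = j ∧ j = p.2))
      = (S ×ˢ S).erase (j, j) := by
    ext ⟨i, k⟩
    simp only [S, mem_filter, mem_univ, true_and, mem_erase, mem_product, ne_eq, Prod.mk.injEq]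
    tauto
  rw [hpairs, sum_mul_sum, ← sum_product']
  split_ifs with hj
  · exact sum_erase_eq_sub (by simp [S, hj])
  · rw [erase_eq_of_notMem (by simp [S, hj]), sub_zero]

theorem pathsTwoWithin_add_sum_diag (g : N → G) (b : N → N → ℝ) (r : G) :
    pathsTwoWithin g b r + ∑ j ∈ univ.filter (fun j => g j = r), b j j
      = ∑ j, (∑ i ∈ univ.filter (fun i => g i = r), b i j)
          * (∑ k ∈ univ.filter (fun k => g k = r), b j k) := by
  rw [pathsTwoWithin, sum_congr rfl fun j _ => sum_pairs_within_erase_diag_mul g r j (b · j) (b j ·),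
    sum_sub_distrib, ← sum_filter]
  have hdiag : ∑ j ∈ univ.filter (fun j => g j = r), b j j * b j j
      = ∑ j ∈ univ.filter (fun j => g j = r), (b j j * (b j j - 1) + b j j) :=
    sum_congr rfl fun _ _ => by ring
  rw [hdiag, sum_add_distrib]
  ring

end PathCount

namespace ProbabilityTheory

variable {Ω : Type*} [MeasurableSpace Ω] {μ : Measure Ω}

lemma hasSum_poisson_weight_mul_descFactorial (r : ℝ≥0) (k : ℕ) :
    HasSum (fun n : ℕ => exp (-r) * r ^ n / n ! * (n.descFactorial k : ℝ)) ((r : ℝ) ^ k) := by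
  rw [← hasSum_nat_add_iff' k]
  have hlow : ∑ n ∈ range k, exp (-r) * r ^ n / n ! * (n.descFactorial k : ℝ) = 0 :=
    sum_eq_zero fun n hn => by simp [Nat.descFactorial_eq_zero_iff_lt.2 (mem_range.1 hn)]
  have hshift : (fun n : ℕ => exp (-r) * r ^ (n + k) / (n + k)! * ((n + k).descFactorial k : ℝ))
      = fun n => (r : ℝ) ^ k * (exp (-r) * r ^ n / n !) := by
    funext n
    have hfact := Nat.factorial_mul_descFactorial (Nat.le_add_left k n)
    rw [Nat.add_sub_cancel] at hfact
    rw [← hfact]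
    push_cast
    field_simp
    ring
  rw [hlow, sub_zero, hshift]
  simpa using (hasSum_one_poissonMeasure r).mul_left ((r : ℝ) ^ k)

lemma integrable_descFactorial_poissonMeasure (r : ℝ≥0) (k : ℕ) :
    Integrable (fun n : ℕ => (n.descFactorial k : ℝ)) (poissonMeasure r) := by
  rw [integrable_poissonMeasure_iff]
  simpa using (hasSum_poisson_weight_mul_descFactorial r k).summable

lemma integral_descFactorial_poissonMeasure (r : ℝ≥0) (k : ℕ) :
    ∫ n, (n.descFactorial k : ℝ) ∂poissonMeasure r = (r : ℝ) ^ k := by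
  rw [integral_poissonMeasure]
  exact (hasSum_poisson_weight_mul_descFactorial r k).tsum_eq

lemma hasLaw_of_map_eq {𝓧 : Type*} [MeasurableSpace 𝓧] {X : Ω → 𝓧} {ν : Measure 𝓧} [NeZero ν]
    (h : μ.map X = ν) : HasLaw X ν μ where
  aemeasurable := .of_map_ne_zero (h ▸ NeZero.ne ν)
  map_eq := h

variable {X : Ω → ℕ} {r : ℝ≥0}

lemma HasLaw.integrable_descFactorial_poisson (hX : HasLaw X (poissonMeasure r) μ) (k : ℕ) :
    Integrable (fun ω => ((X ω).descFactorial k : ℝ)) μ :=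
  (integrable_map_measure .of_discrete hX.aemeasurable).1
    (hX.map_eq ▸ integrable_descFactorial_poissonMeasure r k)

lemma HasLaw.integral_descFactorial_poisson (hX : HasLaw X (poissonMeasure r) μ) (k : ℕ) :
    ∫ ω, ((X ω).descFactorial k : ℝ) ∂μ = (r : ℝ) ^ k := by
  rw [← integral_descFactorial_poissonMeasure r k]
  exact hX.integral_comp (f := fun n : ℕ => (n.descFactorial k : ℝ)) .of_discrete

lemma IndepFun.integral_mul_poisson {Y Z : Ω → ℕ} {s t : ℝ≥0} (hYZ : IndepFun Y Z μ)
    (hY : HasLaw Y (poissonMeasure s) μ) (hZ : HasLaw Z (poissonMeasure t) μ) :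
    Integrable (fun ω => (Y ω : ℝ) * Z ω) μ ∧ ∫ ω, (Y ω : ℝ) * Z ω ∂μ = s * t := by
  have hind : IndepFun (fun ω => (Y ω : ℝ)) (fun ω => (Z ω : ℝ)) μ :=
    hYZ.comp measurable_from_top measurable_from_top
  have hYint : Integrable (fun ω => (Y ω : ℝ)) μ := by
    simpa using hY.integrable_descFactorial_poisson 1
  have hZint : Integrable (fun ω => (Z ω : ℝ)) μ := by
    simpa using hZ.integrable_descFactorial_poisson 1
  have hYmean : ∫ ω, (Y ω : ℝ) ∂μ = s := by simpa using hY.integral_descFactorial_poisson 1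
  have hZmean : ∫ ω, (Z ω : ℝ) ∂μ = t := by simpa using hZ.integral_descFactorial_poisson 1
  refine ⟨hind.integrable_mul hYint hZint, ?_⟩
  rw [← hYmean, ← hZmean]
  exact hind.integral_mul_eq_mul_integral hYint.aestronglyMeasurable hZint.aestronglyMeasurable

theorem integral_pathsTwoWithin_of_iIndepFun_poisson {N G : Type*} [Fintype N] [DecidableEq N]
    [DecidableEq G] {X : N → N → Ω → ℕ} {rate : N → N → ℝ≥0} (g : N → G) (r : G)
    (hindep : iIndepFun (fun p : N × N => X p.1 p.2) μ)
    (hX : ∀ i j, HasLaw (X i j) (poissonMeasure (rate i j)) μ) :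
    ∫ ω, pathsTwoWithin g (fun i j => (X i j ω : ℝ)) r ∂μ
      = ∑ j, (∑ i ∈ univ.filter (fun i => g i = r), (rate i j : ℝ))
          * (∑ k ∈ univ.filter (fun k => g k = r), (rate j k : ℝ)) := by
  have hpair : ∀ j, ∀ p ∈ univ.filter
      (fun p : N × N => g p.1 = r ∧ g p.2 = r ∧ ¬(p.1 = j ∧ j = p.2)),
      Integrable (fun ω => (X p.1 j ω : ℝ) * X j p.2 ω) μ ∧
        ∫ ω, (X p.1 j ω : ℝ) * X j p.2 ω ∂μ = rate p.1 j * rate j p.2 := fun j p hp => by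
    have hne : ((p.1, j) : N × N) ≠ (j, p.2) := fun h => by
      simp only [mem_filter, Prod.mk.injEq] at hp h
      exact hp.2.2.2 h
    exact (hindep.indepFun hne).integral_mul_poisson (hX p.1 j) (hX j p.2)
  have hdiag : ∀ j, Integrable (fun ω => (X j j ω : ℝ) * ((X j j ω : ℝ) - 1)) μ ∧
      ∫ ω, (X j j ω : ℝ) * ((X j j ω : ℝ) - 1) ∂μ = (rate j j : ℝ) * (rate j j - 1) + rate j j :=
    fun j => by
      simp_rw [← Nat.cast_descFactorial_two]
      refine ⟨(hX j j).integrable_descFactorial_poisson 2, ?_⟩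
      rw [(hX j j).integral_descFactorial_poisson 2]
      ring
  rw [← pathsTwoWithin_add_sum_diag]
  unfold pathsTwoWithin
  rw [integral_add (integrable_finsetSum _ fun j _ => integrable_finsetSum _ fun p hp =>
      (hpair j p hp).1) (integrable_finsetSum _ fun j _ => (hdiag j).1),
    integral_finsetSum _ fun j _ => integrable_finsetSum _ fun p hp => (hpair j p hp).1,
    integral_finsetSum _ fun j _ => (hdiag j).1, add_assoc, ← sum_add_distrib]
  congr 1
  · refine sum_congr rfl fun j _ => ?_
    rw [integral_finsetSum _ fun p hp => (hpair j p hp).1]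
    exact sum_congr rfl fun p hp => (hpair j p hp).2
  · exact sum_congr rfl fun j _ => (hdiag j).2

end ProbabilityTheory

section FittedModel

variable {N G : Type*} [Fintype N] [DecidableEq G] (g : N → G) (a : N → N → ℕ)

noncomputable def fittedRate (i j : N) : ℝ≥0 :=
  ((dOut g a i (g j) * dIn g a j (g i) : ℕ) : ℝ≥0) / ((mEdges g a (g i) (g j) : ℕ) : ℝ≥0)

lemma sum_dOut_eq_mEdges (r s : G) :
    ∑ i ∈ univ.filter (fun i => g i = r), dOut g a i s = mEdges g a r s := rfl

lemma sum_dIn_eq_mEdges (r s : G) :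
    ∑ k ∈ univ.filter (fun k => g k = s), dIn g a k r = mEdges g a r s := by
  rw [mEdges, sum_comm]
  rfl

variable {g a}

lemma sum_fittedRate_left {r : G} {j : N} (hm : mEdges g a r (g j) ≠ 0) :
    ∑ i ∈ univ.filter (fun i => g i = r), fittedRate g a i j = dIn g a j r := by
  have hterm : ∀ i ∈ univ.filter (fun i => g i = r),
      fittedRate g a i j = (dOut g a i (g j) : ℝ≥0) * (dIn g a j r / mEdges g a r (g j)) :=
    fun i hi => by
      rw [fittedRate, (mem_filter.1 hi).2]
      push_cast
      ring
  rw [sum_congr rfl hterm, ← sum_mul, ← Nat.cast_sum, sum_dOut_eq_mEdges, mul_div_cancel₀]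
  exact_mod_cast hm

lemma sum_fittedRate_right {r : G} {j : N} (hm : mEdges g a (g j) r ≠ 0) :
    ∑ k ∈ univ.filter (fun k => g k = r), fittedRate g a j k = dOut g a j r := by
  have hterm : ∀ k ∈ univ.filter (fun k => g k = r),
      fittedRate g a j k = (dIn g a k (g j) : ℝ≥0) * (dOut g a j r / mEdges g a (g j) r) :=
    fun k hk => by
      rw [fittedRate, (mem_filter.1 hk).2]
      push_cast
      ring
  rw [sum_congr rfl hterm, ← sum_mul, ← Nat.cast_sum, sum_dIn_eq_mEdges, mul_div_cancel₀]
  exact_mod_cast hm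

end FittedModel

theorem expected_paths_two_within_group_general
    {Ω : Type*} [MeasureSpace Ω]
    {N G : Type*} [Fintype N] [DecidableEq N] [DecidableEq G]
    (g : N → G) (a : N → N → ℕ)
    (hm : ∀ r s : G, 0 < mEdges g a r s)
    (Ahat : N → N → Ω → ℕ)
    (hindep : iIndepFun (fun p : N × N => Ahat p.1 p.2) ℙ)
    (hdist : ∀ i j : N, Measure.map (Ahat i j) ℙ
      = poissonMeasure (((dOut g a i (g j) * dIn g a j (g i) : ℕ) : ℝ≥0)
          / ((mEdges g a (g i) (g j) : ℕ) : ℝ≥0)))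
    (r : G) :
    (∫ x, pathsTwoWithin g (fun i j => (Ahat i j x : ℝ)) r ∂ℙ)
      = ∑ j : N, (dIn g a j r : ℝ) * (dOut g a j r : ℝ) ∧
    ((∀ i : N, a i i = 0) →
      (∑ j : N, (dIn g a j r : ℝ) * (dOut g a j r : ℝ))
        = pathsTwoWithin g (fun i j => (a i j : ℝ)) r) := by
  have hlaw : ∀ i j, HasLaw (Ahat i j) (poissonMeasure (fittedRate g a i j)) ℙ :=
    fun i j => hasLaw_of_map_eq (hdist i j)
  refine ⟨?_, fun hloop => ?_⟩
  · rw [integral_pathsTwoWithin_of_iIndepFun_poisson g r hindep hlaw]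
    refine sum_congr rfl fun j _ => ?_
    rw [← NNReal.coe_sum, ← NNReal.coe_sum, sum_fittedRate_left (hm r (g j)).ne',
      sum_fittedRate_right (hm (g j) r).ne']
    simp
  · have hdiag : ∑ j ∈ univ.filter (fun j => g j = r), (a j j : ℝ) = 0 := by simp [hloop]
    rw [← add_zero (pathsTwoWithin g _ r), ← hdiag, pathsTwoWithin_add_sum_diag]
    simp [dIn, dOut]

/-- under the fitted mixed-propensity model, the expected number of
sampled within-group-`r` directed paths of length 2 not traversing an edge twice equals
`∑_j d_{j,r}^i d_{j,r}^o`; in particular, if `A` has no self-loops, this equals the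
observed number of within-group-`r` paths of length 2. -/
theorem expected_paths_two_within_group
    {Ω : Type*} [MeasureSpace Ω] [IsProbabilityMeasure (ℙ : Measure Ω)]
    {N G : Type*} [Fintype N] [DecidableEq N] [Fintype G] [DecidableEq G]
    (g : N → G) (a : N → N → ℕ)
    (hm : ∀ r s : G, 0 < mEdges g a r s)
    (Ahat : N → N → Ω → ℕ)
    (hindep : iIndepFun (fun p : N × N => Ahat p.1 p.2) ℙ)
    (hdist : ∀ i j : N, Measure.map (Ahat i j) ℙ
      = poissonMeasure (((dOut g a i (g j) * dIn g a j (g i) : ℕ) : ℝ≥0)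
          / ((mEdges g a (g i) (g j) : ℕ) : ℝ≥0)))
    (r : G) :
    (∫ x, pathsTwoWithin g (fun i j => (Ahat i j x : ℝ)) r ∂ℙ)
      = ∑ j : N, (dIn g a j r : ℝ) * (dOut g a j r : ℝ) ∧
    ((∀ i : N, a i i = 0) →
      (∑ j : N, (dIn g a j r : ℝ) * (dOut g a j r : ℝ))
        = pathsTwoWithin g (fun i j => (a i j : ℝ)) r) :=
  expected_paths_two_within_group_general g a hm Ahat hindep hdist r
end

section
/- Assume d_i^o > 0, d_i^i > 0 for all i ∈ N, m_{rs} > 0 for all r, s ∈ G, and d_r^o > 0, d_r^i > 0 for all r ∈ G. Let λ̂ = ℓ(Θ̂, Ω̂) − ℓ₀(Θ̃, Ω̃), where (Θ̂, Ω̂) are the group-constrained mixed-propensity maximum-likelihood values θ̂_{i,s}^o = d_{i,s}^o / m_{g i, s}, θ̂_{i,s}^i = d_{i,s}^i / m_{s, g i}, ω̂_{rs} = m_{rs}, and (Θ̃, Ω̃) are the DCSBM maximum-likelihood values θ̃_i^o = d_i^o / d_{g i}^o, θ̃_i^i = d_i^i / d_{g i}^i, ω̃_{rs} = m_{rs}, with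 the convention 0 log 0 = 0 wherever A i j = 0 or a degree is 0. Then λ̂ = Σ_{i∈N, s∈G} [ d_{i,s}^o log d_{i,s}^o + d_{i,s}^i log d_{i,s}^i ] − Σ_{i∈N} [ d_i^o log d_i^o + d_i^i log d_i^i ] − Σ_{r,s∈G} 2 m_{rs} log m_{rs} + Σ_{r∈G} [ d_r^o log d_r^o + d_r^i log d_r^i ]. -/
/-- `x log x`, extended by `0 log 0 = 0` (note `Real.log 0 = 0`). -/
noncomputable def xlog (x : ℝ) : ℝ := x * Real.log x

/-- Total out-degree of node `i`: `d_i^o = ∑_j A i j`. -/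
def dTotOut {N : Type*} [Fintype N] (a : N → N → ℕ) (i : N) : ℕ := ∑ j : N, a i j

/-- Total in-degree of node `i`: `d_i^i = ∑_j A j i`. -/
def dTotIn {N : Type*} [Fintype N] (a : N → N → ℕ) (i : N) : ℕ := ∑ j : N, a j i

/-- Total out-degree of group `r`: `d_r^o = ∑_{i : g i = r} d_i^o`. -/
def dGrpOut {N G : Type*} [Fintype N] [DecidableEq G] (g : N → G) (a : N → N → ℕ)
    (r : G) : ℕ := ∑ i ∈ Finset.univ.filter (fun i => g i = r), dTotOut a i

/-- Total in-degree of group `r`: `d_r^i = ∑_{i : g i = r} d_i^i`. -/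
def dGrpIn {N G : Type*} [Fintype N] [DecidableEq G] (g : N → G) (a : N → N → ℕ)
    (r : G) : ℕ := ∑ i ∈ Finset.univ.filter (fun i => g i = r), dTotIn a i

/-- Poisson log-likelihood of the directed mixed-propensity model given the adjacency
matrix `a`. -/
noncomputable def loglik {N G : Type*} [Fintype N] (g : N → G) (a : N → N → ℕ)
    (θo θi : N → G → ℝ) (ω : G → G → ℝ) : ℝ :=
  ∑ i : N, ∑ j : N,
    ((a i j : ℝ) * Real.log (θo i (g j) * θi j (g i) * ω (g i) (g j))
      - θo i (g j) * θi j (g i) * ω (g i) (g j))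

/-- Poisson log-likelihood of the directed DCSBM given the adjacency matrix `a`. -/
noncomputable def loglik0 {N G : Type*} [Fintype N] (g : N → G) (a : N → N → ℕ)
    (θo θi : N → ℝ) (ω : G → G → ℝ) : ℝ :=
  ∑ i : N, ∑ j : N,
    ((a i j : ℝ) * Real.log (θo i * θi j * ω (g i) (g j))
      - θo i * θi j * ω (g i) (g j))

/-!
At the maximisers, the fitted edge masses `θ^o θ^i ω` summed over the pairs of nodes of a
block `(r, s)` return exactly `m_{rs}` in either model, so the linear Poisson terms contribute
`∑ m_{rs}` to both and cancel. The logarithmic terms split into sums `∑ A i j log c`, where `c`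
is a count depending only on `i`, on `j`, or on the groups of both; regrouping the edges by that
count turns each such sum into `∑ c log c`. A term `A i j log c` with a vanishing count also has
`A i j = 0`, which is the convention `0 log 0 = 0`.
-/

open Finset

section Fiberwise

variable {N G R : Type*} [Fintype N] [Fintype G] [DecidableEq G]

theorem sum_comp_eq_sum_fiberwise [AddCommMonoid R] (g : N → G) (f : N → G → R) :
    ∑ j, f j (g j) = ∑ s, ∑ j with g j = s, f j s := by
  rw [← sum_fiberwise univ g fun j => f j (g j)]
  exact sum_congr rfl fun s _ => sum_congr rfl fun j hj => by rw [(mem_filter.1 hj).2]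

theorem sum_sum_comp_eq_sum_sum_fiberwise [AddCommMonoid R] (g : N → G)
    (f : N → N → G → G → R) :
    ∑ i, ∑ j, f i j (g i) (g j)
      = ∑ r, ∑ s, ∑ i with g i = r, ∑ j with g j = s, f i j r s :=
  calc ∑ i, ∑ j, f i j (g i) (g j) = ∑ i, ∑ s, ∑ j with g j = s, f i j (g i) s :=
        sum_congr rfl fun i _ => sum_comp_eq_sum_fiberwise g fun j s => f i j (g i) s
    _ = ∑ r, ∑ i with g i = r, ∑ s, ∑ j with g j = s, f i j r s :=
        sum_comp_eq_sum_fiberwise g fun i r => ∑ s, ∑ j with g j = s, f i j r s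
    _ = _ := sum_congr rfl fun _ _ => sum_comm

theorem sum_mul_log_eq_sum_xlog_fiberwise (g : N → G) (c : N → ℕ) (C : G → ℕ)
    (hC : ∀ s, C s = ∑ k with g k = s, c k) :
    ∑ j, (c j : ℝ) * Real.log (C (g j)) = ∑ s, xlog (C s) := by
  rw [sum_comp_eq_sum_fiberwise g fun j s => (c j : ℝ) * Real.log (C s)]
  refine sum_congr rfl fun s _ => ?_
  rw [← sum_mul, ← Nat.cast_sum, ← hC, xlog]

end Fiberwise

theorem sum_sum_div_mul_div_mul {ι κ R : Type*} [Semifield R] (I : Finset ι) (J : Finset κ)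
    (x : ι → R) (y : κ → R) (X Y F : R) :
    ∑ i ∈ I, ∑ j ∈ J, x i / X * (y j / Y) * F
      = (∑ i ∈ I, x i) / X * ((∑ j ∈ J, y j) / Y) * F := by
  rw [sum_div, sum_div, sum_mul_sum, sum_mul]
  simp only [sum_mul]

section Degrees

variable {N G : Type*} [Fintype N] [DecidableEq G] (g : N → G) (a : N → N → ℕ)

theorem le_dOut (i j : N) : a i j ≤ dOut g a i (g j) :=
  single_le_sum (f := a i) (fun _ _ => Nat.zero_le _) (mem_filter.2 ⟨mem_univ j, rfl⟩)

theorem le_dIn (i j : N) : a i j ≤ dIn g a j (g i) :=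
  single_le_sum (f := fun k => a k j) (fun _ _ => Nat.zero_le _)
    (mem_filter.2 ⟨mem_univ i, rfl⟩)

theorem sum_dOut_fiberwise (r s : G) : ∑ i with g i = r, dOut g a i s = mEdges g a r s := rfl

theorem sum_dIn_fiberwise (r s : G) : ∑ j with g j = s, dIn g a j r = mEdges g a r s :=
  sum_comm

theorem sum_sum_mul_left (φ : N → ℝ) :
    ∑ i, ∑ j, (a i j : ℝ) * φ i = ∑ i, (dTotOut a i : ℝ) * φ i := by
  simp only [← sum_mul, dTotOut, Nat.cast_sum]

theorem sum_sum_mul_right (ψ : N → ℝ) :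
    ∑ i, ∑ j, (a i j : ℝ) * ψ j = ∑ j, (dTotIn a j : ℝ) * ψ j := by
  rw [sum_comm]
  simp only [← sum_mul, dTotIn, Nat.cast_sum]

variable [Fintype G]

theorem sum_sum_mul_log_mEdges :
    ∑ i, ∑ j, (a i j : ℝ) * Real.log (mEdges g a (g i) (g j))
      = ∑ r, ∑ s, xlog (mEdges g a r s) := by
  rw [sum_sum_comp_eq_sum_sum_fiberwise g fun i j r s => (a i j : ℝ) * Real.log (mEdges g a r s)]
  refine sum_congr rfl fun r _ => sum_congr rfl fun s _ => ?_
  simp only [← sum_mul, ← Nat.cast_sum, mEdges, xlog]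

end Degrees

section MaximumLikelihood

variable {N G : Type*} [Fintype N] [Fintype G] [DecidableEq G] (g : N → G) (a : N → N → ℕ)

theorem loglik_mle (hm : ∀ r s : G, 0 < mEdges g a r s) :
    loglik g a
        (fun i s => (dOut g a i s : ℝ) / (mEdges g a (g i) s : ℝ))
        (fun i s => (dIn g a i s : ℝ) / (mEdges g a s (g i) : ℝ))
        (fun r s => (mEdges g a r s : ℝ))
      = ∑ i, ∑ s, (xlog (dOut g a i s : ℝ) + xlog (dIn g a i s : ℝ))
        - ∑ r, ∑ s, xlog (mEdges g a r s : ℝ) - ∑ r, ∑ s, (mEdges g a r s : ℝ) := by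
  have hlog : ∀ i j, (a i j : ℝ) * Real.log ((dOut g a i (g j) : ℝ) / mEdges g a (g i) (g j)
        * ((dIn g a j (g i) : ℝ) / mEdges g a (g i) (g j)) * mEdges g a (g i) (g j))
      = a i j * Real.log (dOut g a i (g j)) + a i j * Real.log (dIn g a j (g i))
        - a i j * Real.log (mEdges g a (g i) (g j)) := by
    intro i j
    rcases (a i j).eq_zero_or_pos with hij | hij
    · simp [hij]
    have hout : (dOut g a i (g j) : ℝ) ≠ 0 := by
      exact_mod_cast (hij.trans_le (le_dOut g a i j)).ne'
    have hin : (dIn g a j (g i) : ℝ) ≠ 0 := by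
      exact_mod_cast (hij.trans_le (le_dIn g a i j)).ne'
    have hmij : (mEdges g a (g i) (g j) : ℝ) ≠ 0 := by exact_mod_cast (hm _ _).ne'
    rw [Real.log_mul (mul_ne_zero (div_ne_zero hout hmij) (div_ne_zero hin hmij)) hmij,
      Real.log_mul (div_ne_zero hout hmij) (div_ne_zero hin hmij), Real.log_div hout hmij,
      Real.log_div hin hmij]
    ring
  have hfit : ∑ i, ∑ j, (dOut g a i (g j) : ℝ) / mEdges g a (g i) (g j)
        * ((dIn g a j (g i) : ℝ) / mEdges g a (g i) (g j)) * mEdges g a (g i) (g j)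
      = ∑ r, ∑ s, (mEdges g a r s : ℝ) := by
    rw [sum_sum_comp_eq_sum_sum_fiberwise g fun i j r s =>
      (dOut g a i s : ℝ) / mEdges g a r s * ((dIn g a j r : ℝ) / mEdges g a r s)
        * mEdges g a r s]
    refine sum_congr rfl fun r _ => sum_congr rfl fun s _ => ?_
    have hmrs : (mEdges g a r s : ℝ) ≠ 0 := by exact_mod_cast (hm r s).ne'
    rw [sum_sum_div_mul_div_mul, ← Nat.cast_sum, ← Nat.cast_sum, sum_dOut_fiberwise,
      sum_dIn_fiberwise, div_self hmrs, one_mul, one_mul]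
  have hout : ∀ i,
      ∑ j, (a i j : ℝ) * Real.log (dOut g a i (g j)) = ∑ s, xlog (dOut g a i s) :=
    fun i => sum_mul_log_eq_sum_xlog_fiberwise g (a i) (dOut g a i) fun _ => rfl
  have hin : ∀ j, ∑ i, (a i j : ℝ) * Real.log (dIn g a j (g i)) = ∑ s, xlog (dIn g a j s) :=
    fun j => sum_mul_log_eq_sum_xlog_fiberwise g (a · j) (dIn g a j) fun _ => rfl
  simp only [loglik, sum_sub_distrib, hlog, sum_add_distrib, hout, hfit, sum_sum_mul_log_mEdges]
  rw [sum_comm (f := fun i j => (a i j : ℝ) * Real.log (dIn g a j (g i)))]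
  simp only [hin]

theorem loglik0_mle (hdo : ∀ i, 0 < dTotOut a i) (hdi : ∀ i, 0 < dTotIn a i)
    (hm : ∀ r s : G, 0 < mEdges g a r s)
    (hgo : ∀ r : G, 0 < dGrpOut g a r) (hgi : ∀ r : G, 0 < dGrpIn g a r) :
    loglik0 g a
        (fun i => (dTotOut a i : ℝ) / (dGrpOut g a (g i) : ℝ))
        (fun i => (dTotIn a i : ℝ) / (dGrpIn g a (g i) : ℝ))
        (fun r s => (mEdges g a r s : ℝ))
      = ∑ i, (xlog (dTotOut a i : ℝ) + xlog (dTotIn a i : ℝ))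
        + ∑ r, ∑ s, xlog (mEdges g a r s : ℝ)
        - ∑ r, (xlog (dGrpOut g a r : ℝ) + xlog (dGrpIn g a r : ℝ))
        - ∑ r, ∑ s, (mEdges g a r s : ℝ) := by
  have hlog : ∀ i j, (a i j : ℝ) * Real.log ((dTotOut a i : ℝ) / dGrpOut g a (g i)
        * ((dTotIn a j : ℝ) / dGrpIn g a (g j)) * mEdges g a (g i) (g j))
      = a i j * Real.log (dTotOut a i) + a i j * Real.log (dTotIn a j)
        + a i j * Real.log (mEdges g a (g i) (g j))
        - (a i j * Real.log (dGrpOut g a (g i)) + a i j * Real.log (dGrpIn g a (g j))) := by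
    intro i j
    have ho : (dTotOut a i : ℝ) ≠ 0 := by exact_mod_cast (hdo i).ne'
    have hi : (dTotIn a j : ℝ) ≠ 0 := by exact_mod_cast (hdi j).ne'
    have hGo : (dGrpOut g a (g i) : ℝ) ≠ 0 := by exact_mod_cast (hgo _).ne'
    have hGi : (dGrpIn g a (g j) : ℝ) ≠ 0 := by exact_mod_cast (hgi _).ne'
    have hmij : (mEdges g a (g i) (g j) : ℝ) ≠ 0 := by exact_mod_cast (hm _ _).ne'
    rw [Real.log_mul (mul_ne_zero (div_ne_zero ho hGo) (div_ne_zero hi hGi)) hmij,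
      Real.log_mul (div_ne_zero ho hGo) (div_ne_zero hi hGi), Real.log_div ho hGo,
      Real.log_div hi hGi]
    ring
  have hfit : ∑ i, ∑ j, (dTotOut a i : ℝ) / dGrpOut g a (g i)
        * ((dTotIn a j : ℝ) / dGrpIn g a (g j)) * mEdges g a (g i) (g j)
      = ∑ r, ∑ s, (mEdges g a r s : ℝ) := by
    rw [sum_sum_comp_eq_sum_sum_fiberwise g fun i j r s =>
      (dTotOut a i : ℝ) / dGrpOut g a r * ((dTotIn a j : ℝ) / dGrpIn g a s) * mEdges g a r s]
    refine sum_congr rfl fun r _ => sum_congr rfl fun s _ => ?_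
    have hGo : (dGrpOut g a r : ℝ) ≠ 0 := by exact_mod_cast (hgo r).ne'
    have hGi : (dGrpIn g a s : ℝ) ≠ 0 := by exact_mod_cast (hgi s).ne'
    rw [sum_sum_div_mul_div_mul, ← Nat.cast_sum, ← Nat.cast_sum, ← dGrpOut, ← dGrpIn,
      div_self hGo, div_self hGi, one_mul, one_mul]
  simp only [loglik0, sum_sub_distrib, hlog, sum_add_distrib, hfit, sum_sum_mul_log_mEdges,
    sum_sum_mul_left, sum_sum_mul_right,
    sum_mul_log_eq_sum_xlog_fiberwise g (dTotOut a) (dGrpOut g a) fun _ => rfl,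
    sum_mul_log_eq_sum_xlog_fiberwise g (dTotIn a) (dGrpIn g a) fun _ => rfl, xlog]

end MaximumLikelihood

/-- the log-likelihood ratio `λ̂` between the group-constrained
mixed-propensity MLE and the DCSBM MLE simplifies to the explicit degree-based expression
(equation (18) of the paper). -/
theorem llr_simplification
    {N G : Type*} [Fintype N] [Fintype G] [DecidableEq G]
    (g : N → G) (a : N → N → ℕ)
    (hdo : ∀ i, 0 < dTotOut a i) (hdi : ∀ i, 0 < dTotIn a i)
    (hm : ∀ r s : G, 0 < mEdges g a r s)
    (hgo : ∀ r : G, 0 < dGrpOut g a r) (hgi : ∀ r : G, 0 < dGrpIn g a r) :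
    loglik g a
        (fun i s => (dOut g a i s : ℝ) / (mEdges g a (g i) s : ℝ))
        (fun i s => (dIn g a i s : ℝ) / (mEdges g a s (g i) : ℝ))
        (fun r s => (mEdges g a r s : ℝ))
      - loglik0 g a
          (fun i => (dTotOut a i : ℝ) / (dGrpOut g a (g i) : ℝ))
          (fun i => (dTotIn a i : ℝ) / (dGrpIn g a (g i) : ℝ))
          (fun r s => (mEdges g a r s : ℝ))
    = (∑ i : N, ∑ s : G, (xlog (dOut g a i s : ℝ) + xlog (dIn g a i s : ℝ)))
        - (∑ i : N, (xlog (dTotOut a i : ℝ) + xlog (dTotIn a i : ℝ)))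
        - (∑ r : G, ∑ s : G, 2 * xlog (mEdges g a r s : ℝ))
        + (∑ r : G, (xlog (dGrpOut g a r : ℝ) + xlog (dGrpIn g a r : ℝ))) := by
  rw [loglik_mle g a hm, loglik0_mle g a hdo hdi hm hgo hgi]
  simp only [← mul_sum]
  ring
end
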